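/- (Flat power under complete non-identification.) Under the rank condition, suppose additionally the linear reduced form Y = X₁Π₁ + X₂Π₂ + V holds for some k₁×G matrix Π₁, k₂×G matrix Π₂ and T×G matrix V, and that y = Yβ + X₁γ + V·a + σ·ε for some β ∈ ℝ^G, γ ∈ ℝ^{k₁}, a ∈ ℝ^G, real σ ≠ 0, and ε ∈ ℝ^T. If M₁X₂Π₂·a = 0 (in particular if Π₂ = 0, i.e., the instruments are totally irrelevant), then, setting y₀ := Yβ + X₁γ + σ·ε, one has C₁y = C₁y₀, yᵀΨ₀y = y₀ᵀΨ₀y₀, yᵀΛ_ly = y₀ᵀΛ_ly₀ for l = 1, 2, 3, 4, yᵀΨ_Ry = y₀ᵀΨ_Ry₀, and yᵀΛ_Ry = y₀ᵀΛ_Ry₀; hence every exogeneity statistic takes exactly the same value at y (endogeneity a ≠ 0) as at y₀ (exogeneity a = 0), so the statistics cannot distinguish the alternative from the null. -/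

import Mathlib

open Matrix

variable {T G k₁ k₂ : ℕ}

/-- Orthogonal projection `P̄[A] = A(AᵀA)⁻¹Aᵀ` onto the column space of `A`. -/
noncomputable def projM {n : Type*} [Fintype n] [DecidableEq n]
    (A : Matrix (Fin T) n ℝ) : Matrix (Fin T) (Fin T) ℝ :=
  A * (Aᵀ * A)⁻¹ * Aᵀ

/-- The annihilator `M̄[A] = I - P̄[A]`. -/
noncomputable def annM {n : Type*} [Fintype n] [DecidableEq n]
    (A : Matrix (Fin T) n ℝ) : Matrix (Fin T) (Fin T) ℝ :=
  1 - projM A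

noncomputable def M1 (X₁ : Matrix (Fin T) (Fin k₁) ℝ) : Matrix (Fin T) (Fin T) ℝ :=
  annM X₁

noncomputable def Pm (X₁ : Matrix (Fin T) (Fin k₁) ℝ) (X₂ : Matrix (Fin T) (Fin k₂) ℝ) :
    Matrix (Fin T) (Fin T) ℝ :=
  projM (fromCols X₁ X₂)

noncomputable def Mm (X₁ : Matrix (Fin T) (Fin k₁) ℝ) (X₂ : Matrix (Fin T) (Fin k₂) ℝ) :
    Matrix (Fin T) (Fin T) ℝ :=
  annM (fromCols X₁ X₂)

noncomputable def N1 (X₁ : Matrix (Fin T) (Fin k₁) ℝ) (X₂ : Matrix (Fin T) (Fin k₂) ℝ) :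
    Matrix (Fin T) (Fin T) ℝ :=
  M1 X₁ * Pm X₁ X₂

noncomputable def B1 (Y : Matrix (Fin T) (Fin G) ℝ) (X₁ : Matrix (Fin T) (Fin k₁) ℝ) :
    Matrix (Fin G) (Fin T) ℝ :=
  (Yᵀ * M1 X₁ * Y)⁻¹ * (Yᵀ * M1 X₁)

noncomputable def B2 (Y : Matrix (Fin T) (Fin G) ℝ) (X₁ : Matrix (Fin T) (Fin k₁) ℝ)
    (X₂ : Matrix (Fin T) (Fin k₂) ℝ) : Matrix (Fin G) (Fin T) ℝ :=
  (Yᵀ * N1 X₁ X₂ * Y)⁻¹ * (Yᵀ * N1 X₁ X₂)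

noncomputable def C1 (Y : Matrix (Fin T) (Fin G) ℝ) (X₁ : Matrix (Fin T) (Fin k₁) ℝ)
    (X₂ : Matrix (Fin T) (Fin k₂) ℝ) : Matrix (Fin G) (Fin T) ℝ :=
  B2 Y X₁ X₂ - B1 Y X₁

/-- OLS estimator `β̂`. -/
noncomputable def betaOLS (y : Fin T → ℝ) (Y : Matrix (Fin T) (Fin G) ℝ)
    (X₁ : Matrix (Fin T) (Fin k₁) ℝ) : Fin G → ℝ :=
  B1 Y X₁ *ᵥ y

/-- 2SLS estimator `β̃`. -/
noncomputable def beta2S (y : Fin T → ℝ) (Y : Matrix (Fin T) (Fin G) ℝ)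
    (X₁ : Matrix (Fin T) (Fin k₁) ℝ) (X₂ : Matrix (Fin T) (Fin k₂) ℝ) : Fin G → ℝ :=
  B2 Y X₁ X₂ *ᵥ y

noncomputable def OmIV (Y : Matrix (Fin T) (Fin G) ℝ) (X₁ : Matrix (Fin T) (Fin k₁) ℝ)
    (X₂ : Matrix (Fin T) (Fin k₂) ℝ) : Matrix (Fin G) (Fin G) ℝ :=
  (T : ℝ)⁻¹ • (Yᵀ * N1 X₁ X₂ * Y)

noncomputable def OmLS (Y : Matrix (Fin T) (Fin G) ℝ) (X₁ : Matrix (Fin T) (Fin k₁) ℝ) :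
    Matrix (Fin G) (Fin G) ℝ :=
  (T : ℝ)⁻¹ • (Yᵀ * M1 X₁ * Y)

noncomputable def SigV (Y : Matrix (Fin T) (Fin G) ℝ) (X₁ : Matrix (Fin T) (Fin k₁) ℝ)
    (X₂ : Matrix (Fin T) (Fin k₂) ℝ) : Matrix (Fin G) (Fin G) ℝ :=
  (T : ℝ)⁻¹ • (Yᵀ * Mm X₁ X₂ * Y)

noncomputable def Dhat (Y : Matrix (Fin T) (Fin G) ℝ) (X₁ : Matrix (Fin T) (Fin k₁) ℝ)
    (X₂ : Matrix (Fin T) (Fin k₂) ℝ) : Matrix (Fin G) (Fin G) ℝ :=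
  (OmIV Y X₁ X₂)⁻¹ - (OmLS Y X₁)⁻¹

noncomputable def Psi0 (Y : Matrix (Fin T) (Fin G) ℝ) (X₁ : Matrix (Fin T) (Fin k₁) ℝ)
    (X₂ : Matrix (Fin T) (Fin k₂) ℝ) : Matrix (Fin T) (Fin T) ℝ :=
  (C1 Y X₁ X₂)ᵀ * (Dhat Y X₁ X₂)⁻¹ * C1 Y X₁ X₂

noncomputable def N2 (Y : Matrix (Fin T) (Fin G) ℝ) (X₁ : Matrix (Fin T) (Fin k₁) ℝ)
    (X₂ : Matrix (Fin T) (Fin k₂) ℝ) : Matrix (Fin T) (Fin T) ℝ :=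
  1 - M1 X₁ * Y * B2 Y X₁ X₂

noncomputable def Lam1 (Y : Matrix (Fin T) (Fin G) ℝ) (X₁ : Matrix (Fin T) (Fin k₁) ℝ)
    (X₂ : Matrix (Fin T) (Fin k₂) ℝ) : Matrix (Fin T) (Fin T) ℝ :=
  (T : ℝ)⁻¹ • (N1 X₁ X₂ * annM (N1 X₁ X₂ * Y) * N1 X₁ X₂)

noncomputable def Lam2 (Y : Matrix (Fin T) (Fin G) ℝ) (X₁ : Matrix (Fin T) (Fin k₁) ℝ)
    (X₂ : Matrix (Fin T) (Fin k₂) ℝ) : Matrix (Fin T) (Fin T) ℝ :=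
  M1 X₁ * ((T : ℝ)⁻¹ • annM (M1 X₁ * Y) - Psi0 Y X₁ X₂) * M1 X₁

noncomputable def Lam3 (Y : Matrix (Fin T) (Fin G) ℝ) (X₁ : Matrix (Fin T) (Fin k₁) ℝ)
    (X₂ : Matrix (Fin T) (Fin k₂) ℝ) : Matrix (Fin T) (Fin T) ℝ :=
  (T : ℝ)⁻¹ • (M1 X₁ * (N2 Y X₁ X₂)ᵀ * N2 Y X₁ X₂ * M1 X₁)

noncomputable def Lam4 (Y : Matrix (Fin T) (Fin G) ℝ) (X₁ : Matrix (Fin T) (Fin k₁) ℝ) :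
    Matrix (Fin T) (Fin T) ℝ :=
  (T : ℝ)⁻¹ • (M1 X₁ * annM (M1 X₁ * Y) * M1 X₁)

def Ybar (Y : Matrix (Fin T) (Fin G) ℝ) (X₁ : Matrix (Fin T) (Fin k₁) ℝ) :
    Matrix (Fin T) (Fin G ⊕ Fin k₁) ℝ :=
  fromCols Y X₁

def Zfull (Y : Matrix (Fin T) (Fin G) ℝ) (X₁ : Matrix (Fin T) (Fin k₁) ℝ)
    (X₂ : Matrix (Fin T) (Fin k₂) ℝ) : Matrix (Fin T) (Fin G ⊕ (Fin k₁ ⊕ Fin k₂)) ℝ :=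
  fromCols Y (fromCols X₁ X₂)

noncomputable def PsiR (Y : Matrix (Fin T) (Fin G) ℝ) (X₁ : Matrix (Fin T) (Fin k₁) ℝ)
    (X₂ : Matrix (Fin T) (Fin k₂) ℝ) : Matrix (Fin T) (Fin T) ℝ :=
  (T : ℝ)⁻¹ • (annM (Ybar Y X₁) - annM (Zfull Y X₁ X₂))

noncomputable def LamR (Y : Matrix (Fin T) (Fin G) ℝ) (X₁ : Matrix (Fin T) (Fin k₁) ℝ)
    (X₂ : Matrix (Fin T) (Fin k₂) ℝ) : Matrix (Fin T) (Fin T) ℝ :=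
  (T : ℝ)⁻¹ • annM (Zfull Y X₁ X₂)

/-- `σ̂² = (1/T)(y−Yβ̂)ᵀM₁(y−Yβ̂)`. -/
noncomputable def sigHat2 (y : Fin T → ℝ) (Y : Matrix (Fin T) (Fin G) ℝ)
    (X₁ : Matrix (Fin T) (Fin k₁) ℝ) : ℝ :=
  (T : ℝ)⁻¹ * ((y - Y *ᵥ betaOLS y Y X₁) ⬝ᵥ (M1 X₁ *ᵥ (y - Y *ᵥ betaOLS y Y X₁)))

/-- `σ̃² = (1/T)(y−Yβ̃)ᵀM₁(y−Yβ̃)`. -/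
noncomputable def sigTil2 (y : Fin T → ℝ) (Y : Matrix (Fin T) (Fin G) ℝ)
    (X₁ : Matrix (Fin T) (Fin k₁) ℝ) (X₂ : Matrix (Fin T) (Fin k₂) ℝ) : ℝ :=
  (T : ℝ)⁻¹ * ((y - Y *ᵥ beta2S y Y X₁ X₂) ⬝ᵥ (M1 X₁ *ᵥ (y - Y *ᵥ beta2S y Y X₁ X₂)))

/-- `σ̃₁² = (1/T)(y−Yβ̃)ᵀN₁(y−Yβ̃)`. -/
noncomputable def sigTil1sq (y : Fin T → ℝ) (Y : Matrix (Fin T) (Fin G) ℝ)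
    (X₁ : Matrix (Fin T) (Fin k₁) ℝ) (X₂ : Matrix (Fin T) (Fin k₂) ℝ) : ℝ :=
  (T : ℝ)⁻¹ * ((y - Y *ᵥ beta2S y Y X₁ X₂) ⬝ᵥ (N1 X₁ X₂ *ᵥ (y - Y *ᵥ beta2S y Y X₁ X₂)))

/-- `σ̃₂² = σ̂² − (β̃−β̂)ᵀΔ̂⁻¹(β̃−β̂)`. -/
noncomputable def sigTil2sq (y : Fin T → ℝ) (Y : Matrix (Fin T) (Fin G) ℝ)
    (X₁ : Matrix (Fin T) (Fin k₁) ℝ) (X₂ : Matrix (Fin T) (Fin k₂) ℝ) : ℝ :=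
  sigHat2 y Y X₁ -
    (beta2S y Y X₁ X₂ - betaOLS y Y X₁) ⬝ᵥ
      ((Dhat Y X₁ X₂)⁻¹ *ᵥ (beta2S y Y X₁ X₂ - betaOLS y Y X₁))

/-- The rank condition: `X₁`, `X = [X₁, X₂]`, `[Y, X]` and `[P̄[X]Y, X₁]` all have
full column rank. -/
def RankCond (Y : Matrix (Fin T) (Fin G) ℝ) (X₁ : Matrix (Fin T) (Fin k₁) ℝ)
    (X₂ : Matrix (Fin T) (Fin k₂) ℝ) : Prop :=
  X₁.rank = k₁ ∧ (fromCols X₁ X₂).rank = k₁ + k₂ ∧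
    (fromCols Y (fromCols X₁ X₂)).rank = G + (k₁ + k₂) ∧
    (fromCols (Pm X₁ X₂ * Y) X₁).rank = G + k₁

/-!
The endogeneity term `y - y₀ = V a` lies in the column space of `Ȳ = [Y, X₁]`, because
`V = Y - X₁Π₁ - X₂Π₂` and `M₁X₂Π₂a = 0` puts `X₂Π₂a` in the column space of `X₁`.
Every matrix in the statement annihilates `Ȳ`, and so does its transpose: `B₁` and `B₂` are
left inverses of `Y` that kill `X₁`, so `C₁Ȳ = 0`; each `Λ_l` has the form `K R K` with
`K ∈ {M₁, N₁}` killing `X₁` and `R` killing `KY`; and the columns of `Ȳ` are among those of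
`Z`. So moving from `y₀` to `y` changes neither `C₁y` nor any of the quadratic forms.
-/

section LinearAlgebra

variable {R m n k : Type*} [Fintype n]

lemma mulVec_injective_iff_forall_eq_zero [CommRing R] {A : Matrix m n R} :
    Function.Injective A.mulVec ↔ ∀ v, A *ᵥ v = 0 → v = 0 := by
  rw [← coe_mulVecLin]
  exact injective_iff_map_eq_zero _

lemma mulVec_injective_of_rank_eq_card [Field R] {A : Matrix m n R}
    (h : A.rank = Fintype.card n) : Function.Injective A.mulVec := by
  have hrk := LinearMap.finrank_range_add_finrank_ker A.mulVecLin
  rw [Module.finrank_fintype_fun_eq_card, ← rank, h, add_eq_left,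
    Submodule.finrank_eq_zero] at hrk
  rw [← coe_mulVecLin]
  exact LinearMap.ker_eq_bot.mp hrk

lemma isUnit_transpose_mul_self_of_mulVec_injective [Fintype m] [DecidableEq n] [Field R]
    [LinearOrder R] [IsStrictOrderedRing R] {A : Matrix m n R}
    (h : Function.Injective A.mulVec) :
    IsUnit (Aᵀ * A) := by
  rw [← mulVec_injective_iff_isUnit, ← coe_mulVecLin, ← LinearMap.ker_eq_bot,
    ker_mulVecLin_transpose_mul_self, LinearMap.ker_eq_bot, coe_mulVecLin]
  exact h

lemma isUnit_transpose_mul_mul_of_isIdempotentElem [Fintype m] [DecidableEq n] [Field R]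
    [LinearOrder R] [IsStrictOrderedRing R] {Q : Matrix m m R} {B : Matrix m n R}
    (hQt : Qᵀ = Q) (hQ : IsIdempotentElem Q) (h : Function.Injective (Q * B).mulVec) :
    IsUnit (Bᵀ * Q * B) := by
  have hgram : (Q * B)ᵀ * (Q * B) = Bᵀ * Q * B := by
    rw [transpose_mul, hQt, Matrix.mul_assoc, ← Matrix.mul_assoc Q, hQ.eq, Matrix.mul_assoc]
  exact hgram ▸ isUnit_transpose_mul_self_of_mulVec_injective h

lemma mul_fromCols_eq_zero_iff [Semiring R] {n₁ n₂ : Type*} (A : Matrix m n R)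
    (B₁ : Matrix n n₁ R) (B₂ : Matrix n n₂ R) :
    A * fromCols B₁ B₂ = 0 ↔ A * B₁ = 0 ∧ A * B₂ = 0 := by
  rw [mul_fromCols, ← fromCols_zero, fromCols_ext_iff]

lemma mulVec_injective_fromCols_of_fromCols_fromCols [CommRing R] [Fintype k] {n' : Type*}
    [Fintype n'] {A : Matrix m n R} {B : Matrix m k R} {C : Matrix m n' R}
    (h : Function.Injective (fromCols A (fromCols B C)).mulVec) :
    Function.Injective (fromCols A B).mulVec := by
  rw [mulVec_injective_iff_forall_eq_zero] at h ⊢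
  intro v hv
  have hext := h (Sum.elim (v ∘ Sum.inl) (Sum.elim (v ∘ Sum.inr) 0)) (by
    rw [fromCols_mulVec_sumElim, fromCols_mulVec_sumElim, mulVec_zero, add_zero,
      ← fromCols_mulVec_sumElim, Sum.elim_comp_inl_inr, hv])
  funext i
  cases i with
  | inl i => exact congrFun hext (Sum.inl i)
  | inr j => exact congrFun hext (Sum.inr (Sum.inl j))

lemma dotProduct_mulVec_add_mulVec_of_mul_eq_zero [Fintype m] [CommRing R] [Fintype k]
    {Q : Matrix m m R} {W : Matrix m k R} (hQ : Q * W = 0) (hQt : Qᵀ * W = 0)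
    (x : m → R) (v : k → R) :
    (x + W *ᵥ v) ⬝ᵥ (Q *ᵥ (x + W *ᵥ v)) = x ⬝ᵥ (Q *ᵥ x) := by
  have hQWv : Q *ᵥ (W *ᵥ v) = 0 := by rw [mulVec_mulVec, hQ, zero_mulVec]
  have hWvQ : (W *ᵥ v) ⬝ᵥ (Q *ᵥ x) = 0 := by
    rw [dotProduct_mulVec, ← mulVec_transpose, mulVec_mulVec, hQt, zero_mulVec,
      zero_dotProduct]
  rw [mulVec_add, hQWv, add_zero, add_dotProduct, hWvQ, add_zero]

end LinearAlgebra

section Projection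

variable {n : Type*} [Fintype n] [DecidableEq n] {A : Matrix (Fin T) n ℝ}

lemma transpose_projM (A : Matrix (Fin T) n ℝ) : (projM A)ᵀ = projM A := by
  rw [projM, transpose_mul, transpose_mul, transpose_nonsing_inv, transpose_mul,
    transpose_transpose, Matrix.mul_assoc]

lemma transpose_annM (A : Matrix (Fin T) n ℝ) : (annM A)ᵀ = annM A := by
  rw [annM, transpose_sub, transpose_one, transpose_projM]

lemma projM_mul_self (h : IsUnit (Aᵀ * A)) : projM A * A = A := by
  rw [projM, Matrix.mul_assoc, Matrix.mul_assoc,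
    nonsing_inv_mul _ ((isUnit_iff_isUnit_det _).mp h), Matrix.mul_one]

lemma annM_mul_self (h : IsUnit (Aᵀ * A)) : annM A * A = 0 := by
  rw [annM, Matrix.sub_mul, Matrix.one_mul, projM_mul_self h, sub_self]

lemma isIdempotentElem_projM (h : IsUnit (Aᵀ * A)) : IsIdempotentElem (projM A) := by
  rw [IsIdempotentElem]
  nth_rewrite 2 [projM]
  rw [← Matrix.mul_assoc, ← Matrix.mul_assoc, projM_mul_self h, projM]

lemma isIdempotentElem_annM (h : IsUnit (Aᵀ * A)) : IsIdempotentElem (annM A) :=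
  (isIdempotentElem_projM h).one_sub

lemma exists_mulVec_eq_of_annM_mulVec_eq_zero {u : Fin T → ℝ} (h : annM A *ᵥ u = 0) :
    ∃ w, A *ᵥ w = u := by
  rw [annM, sub_mulVec, one_mulVec, sub_eq_zero, projM, ← mulVec_mulVec,
    ← mulVec_mulVec] at h
  exact ⟨_, h.symm⟩

lemma mulVec_injective_annM_mul {k : Type*} [Fintype k] {B : Matrix (Fin T) k ℝ}
    (h : Function.Injective (fromCols B A).mulVec) :
    Function.Injective (annM A * B).mulVec := by
  rw [mulVec_injective_iff_forall_eq_zero] at h ⊢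
  intro v hv
  rw [← mulVec_mulVec] at hv
  obtain ⟨w, hw⟩ := exists_mulVec_eq_of_annM_mulVec_eq_zero hv
  have hext := h (Sum.elim v (-w)) (by rw [fromCols_mulVec_sumElim, mulVec_neg, hw,
    add_neg_cancel])
  funext i
  exact congrFun hext (Sum.inl i)

lemma mul_annM_of_mul_eq_zero {m : Type*} {K : Matrix m (Fin T) ℝ} (hK : K * A = 0) :
    K * annM A = K := by
  rw [annM, projM, Matrix.mul_sub, Matrix.mul_one, ← Matrix.mul_assoc, ← Matrix.mul_assoc,
    hK, Matrix.zero_mul, Matrix.zero_mul, sub_zero]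

end Projection

variable {Y : Matrix (Fin T) (Fin G) ℝ} {X₁ : Matrix (Fin T) (Fin k₁) ℝ}
  {X₂ : Matrix (Fin T) (Fin k₂) ℝ}

lemma exists_eq_add_Ybar_mulVec {y y₀ : Fin T → ℝ} {Pi1 : Matrix (Fin k₁) (Fin G) ℝ}
    {Pi2 : Matrix (Fin k₂) (Fin G) ℝ} {V : Matrix (Fin T) (Fin G) ℝ} {β : Fin G → ℝ}
    {γ : Fin k₁ → ℝ} {a : Fin G → ℝ} {σ : ℝ} {ε : Fin T → ℝ}
    (hY : Y = X₁ * Pi1 + X₂ * Pi2 + V) (hy : y = Y *ᵥ β + X₁ *ᵥ γ + V *ᵥ a + σ • ε)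
    (h0 : (M1 X₁ * X₂ * Pi2) *ᵥ a = 0) (hy₀ : y₀ = Y *ᵥ β + X₁ *ᵥ γ + σ • ε) :
    ∃ v, y = y₀ + Ybar Y X₁ *ᵥ v := by
  obtain ⟨u, hu⟩ : ∃ u, X₁ *ᵥ u = X₂ *ᵥ (Pi2 *ᵥ a) := by
    refine exists_mulVec_eq_of_annM_mulVec_eq_zero ?_
    rwa [mulVec_mulVec, mulVec_mulVec, ← M1]
  have hV : V = Y - X₁ * Pi1 - X₂ * Pi2 := by rw [hY]; abel
  refine ⟨Sum.elim a (-(Pi1 *ᵥ a) - u), ?_⟩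
  rw [hy, hy₀, Ybar, fromCols_mulVec_sumElim, hV, sub_mulVec, sub_mulVec,
    ← mulVec_mulVec, ← mulVec_mulVec, ← hu, mulVec_sub, mulVec_neg]
  abel

lemma mul_mul_mul_Ybar_eq_zero {K S : Matrix (Fin T) (Fin T) ℝ} (hK : K * X₁ = 0)
    (hS : S * (K * Y) = 0) : K * S * K * Ybar Y X₁ = 0 := by
  rw [Ybar, mul_fromCols_eq_zero_iff]
  simp only [Matrix.mul_assoc, hK, hS, Matrix.mul_zero, and_self]

lemma transpose_M1 (X₁ : Matrix (Fin T) (Fin k₁) ℝ) : (M1 X₁)ᵀ = M1 X₁ := transpose_annM X₁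

lemma Psi0_mul_eq_zero {n : Type*} [Fintype n] {W : Matrix (Fin T) n ℝ}
    (hW : C1 Y X₁ X₂ * W = 0) : Psi0 Y X₁ X₂ * W = 0 := by
  rw [Psi0, Matrix.mul_assoc, hW, Matrix.mul_zero]

lemma transpose_Psi0_mul_eq_zero {n : Type*} [Fintype n] {W : Matrix (Fin T) n ℝ}
    (hW : C1 Y X₁ X₂ * W = 0) : (Psi0 Y X₁ X₂)ᵀ * W = 0 := by
  simp only [Psi0, transpose_mul, transpose_transpose, Matrix.mul_assoc, hW, Matrix.mul_zero]

lemma transpose_Lam3 : (Lam3 Y X₁ X₂)ᵀ = Lam3 Y X₁ X₂ := by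
  simp only [Lam3, transpose_smul, transpose_mul, transpose_transpose, transpose_M1,
    Matrix.mul_assoc]

lemma transpose_Lam4 : (Lam4 Y X₁)ᵀ = Lam4 Y X₁ := by
  simp only [Lam4, transpose_smul, transpose_mul, transpose_annM, transpose_M1, Matrix.mul_assoc]

lemma transpose_PsiR : (PsiR Y X₁ X₂)ᵀ = PsiR Y X₁ X₂ := by
  rw [PsiR, transpose_smul, transpose_sub, transpose_annM, transpose_annM]

lemma transpose_LamR : (LamR Y X₁ X₂)ᵀ = LamR Y X₁ X₂ := by
  rw [LamR, transpose_smul, transpose_annM]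

namespace RankCond

variable (h : RankCond Y X₁ X₂)
include h

lemma isUnit_X₁ : IsUnit (X₁ᵀ * X₁) :=
  isUnit_transpose_mul_self_of_mulVec_injective
    (mulVec_injective_of_rank_eq_card (by simpa using h.1))

lemma isUnit_X : IsUnit ((fromCols X₁ X₂)ᵀ * fromCols X₁ X₂) :=
  isUnit_transpose_mul_self_of_mulVec_injective
    (mulVec_injective_of_rank_eq_card (by simpa using h.2.1))

lemma mulVec_injective_Zfull : Function.Injective (Zfull Y X₁ X₂).mulVec :=
  mulVec_injective_of_rank_eq_card (by simpa [Zfull] using h.2.2.1)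

lemma isUnit_Zfull : IsUnit ((Zfull Y X₁ X₂)ᵀ * Zfull Y X₁ X₂) :=
  isUnit_transpose_mul_self_of_mulVec_injective h.mulVec_injective_Zfull

lemma mulVec_injective_Ybar : Function.Injective (Ybar Y X₁).mulVec :=
  mulVec_injective_fromCols_of_fromCols_fromCols h.mulVec_injective_Zfull

lemma isUnit_Ybar : IsUnit ((Ybar Y X₁)ᵀ * Ybar Y X₁) :=
  isUnit_transpose_mul_self_of_mulVec_injective h.mulVec_injective_Ybar

lemma M1_mul_X₁ : M1 X₁ * X₁ = 0 := annM_mul_self h.isUnit_X₁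

lemma isIdempotentElem_M1 : IsIdempotentElem (M1 X₁) := isIdempotentElem_annM h.isUnit_X₁

lemma Pm_mul_X₁ : Pm X₁ X₂ * X₁ = X₁ :=
  ((fromCols_ext_iff _ _ _ _).mp (by rw [← mul_fromCols]; exact projM_mul_self h.isUnit_X)).1

lemma Pm_mul_projM : Pm X₁ X₂ * projM X₁ = projM X₁ := by
  rw [projM, ← Matrix.mul_assoc, ← Matrix.mul_assoc, h.Pm_mul_X₁]

lemma projM_mul_Pm : projM X₁ * Pm X₁ X₂ = projM X₁ := by
  simpa only [transpose_mul, transpose_projM, Pm] using congrArg transpose h.Pm_mul_projM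

lemma N1_eq_sub : N1 X₁ X₂ = Pm X₁ X₂ - projM X₁ := by
  rw [N1, M1, annM, Matrix.sub_mul, Matrix.one_mul, h.projM_mul_Pm]

lemma transpose_N1 : (N1 X₁ X₂)ᵀ = N1 X₁ X₂ := by
  rw [h.N1_eq_sub, transpose_sub, Pm, transpose_projM, transpose_projM]

lemma isIdempotentElem_N1 : IsIdempotentElem (N1 X₁ X₂) :=
  h.N1_eq_sub ▸ (isIdempotentElem_projM h.isUnit_X₁).sub (isIdempotentElem_projM h.isUnit_X)
    h.projM_mul_Pm h.Pm_mul_projM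

lemma N1_mul_X₁ : N1 X₁ X₂ * X₁ = 0 := by
  rw [h.N1_eq_sub, Matrix.sub_mul, h.Pm_mul_X₁, projM_mul_self h.isUnit_X₁, sub_self]

lemma mulVec_injective_M1_mul_Y : Function.Injective (M1 X₁ * Y).mulVec :=
  mulVec_injective_annM_mul h.mulVec_injective_Ybar

lemma mulVec_injective_N1_mul_Y : Function.Injective (N1 X₁ X₂ * Y).mulVec := by
  rw [N1, M1, Matrix.mul_assoc]
  exact mulVec_injective_annM_mul (mulVec_injective_of_rank_eq_card (by simpa using h.2.2.2))

lemma annM_M1_mul_Y_mul_self : annM (M1 X₁ * Y) * (M1 X₁ * Y) = 0 :=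
  annM_mul_self (isUnit_transpose_mul_self_of_mulVec_injective h.mulVec_injective_M1_mul_Y)

lemma annM_N1_mul_Y_mul_self : annM (N1 X₁ X₂ * Y) * (N1 X₁ X₂ * Y) = 0 :=
  annM_mul_self (isUnit_transpose_mul_self_of_mulVec_injective h.mulVec_injective_N1_mul_Y)

lemma isUnit_Yt_M1_Y : IsUnit (Yᵀ * M1 X₁ * Y) :=
  isUnit_transpose_mul_mul_of_isIdempotentElem (transpose_M1 X₁) h.isIdempotentElem_M1
    h.mulVec_injective_M1_mul_Y

lemma isUnit_Yt_N1_Y : IsUnit (Yᵀ * N1 X₁ X₂ * Y) :=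
  isUnit_transpose_mul_mul_of_isIdempotentElem h.transpose_N1 h.isIdempotentElem_N1
    h.mulVec_injective_N1_mul_Y

lemma B1_mul_Y : B1 Y X₁ * Y = 1 := by
  rw [B1, Matrix.mul_assoc, nonsing_inv_mul _ ((isUnit_iff_isUnit_det _).mp h.isUnit_Yt_M1_Y)]

lemma B2_mul_Y : B2 Y X₁ X₂ * Y = 1 := by
  rw [B2, Matrix.mul_assoc, nonsing_inv_mul _ ((isUnit_iff_isUnit_det _).mp h.isUnit_Yt_N1_Y)]

lemma B1_mul_X₁ : B1 Y X₁ * X₁ = 0 := by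
  simp only [B1, Matrix.mul_assoc, h.M1_mul_X₁, Matrix.mul_zero]

lemma B2_mul_X₁ : B2 Y X₁ X₂ * X₁ = 0 := by
  simp only [B2, Matrix.mul_assoc, h.N1_mul_X₁, Matrix.mul_zero]

lemma C1_mul_X₁ : C1 Y X₁ X₂ * X₁ = 0 := by
  rw [C1, Matrix.sub_mul, h.B1_mul_X₁, h.B2_mul_X₁, sub_self]

lemma C1_mul_Y : C1 Y X₁ X₂ * Y = 0 := by
  rw [C1, Matrix.sub_mul, h.B1_mul_Y, h.B2_mul_Y, sub_self]

lemma C1_mul_Ybar : C1 Y X₁ X₂ * Ybar Y X₁ = 0 :=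
  (mul_fromCols_eq_zero_iff _ _ _).mpr ⟨h.C1_mul_Y, h.C1_mul_X₁⟩

lemma C1_mul_M1_mul_Y : C1 Y X₁ X₂ * (M1 X₁ * Y) = 0 := by
  rw [← Matrix.mul_assoc, M1, mul_annM_of_mul_eq_zero h.C1_mul_X₁, h.C1_mul_Y]

lemma N2_mul_M1_mul_Y : N2 Y X₁ X₂ * (M1 X₁ * Y) = 0 := by
  rw [N2, Matrix.sub_mul, Matrix.one_mul, Matrix.mul_assoc, ← Matrix.mul_assoc (B2 Y X₁ X₂), M1,
    mul_annM_of_mul_eq_zero h.B2_mul_X₁, h.B2_mul_Y, Matrix.mul_one, ← M1, sub_self]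

lemma Psi0_mul_Ybar : Psi0 Y X₁ X₂ * Ybar Y X₁ = 0 := Psi0_mul_eq_zero h.C1_mul_Ybar

lemma transpose_Psi0_mul_Ybar : (Psi0 Y X₁ X₂)ᵀ * Ybar Y X₁ = 0 :=
  transpose_Psi0_mul_eq_zero h.C1_mul_Ybar

lemma transpose_Lam1 : (Lam1 Y X₁ X₂)ᵀ = Lam1 Y X₁ X₂ := by
  simp only [Lam1, transpose_smul, transpose_mul, h.transpose_N1, transpose_annM,
    Matrix.mul_assoc]

lemma Lam1_mul_Ybar : Lam1 Y X₁ X₂ * Ybar Y X₁ = 0 := by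
  rw [Lam1, Matrix.smul_mul, mul_mul_mul_Ybar_eq_zero h.N1_mul_X₁ h.annM_N1_mul_Y_mul_self,
    smul_zero]

lemma Lam2_mul_Ybar : Lam2 Y X₁ X₂ * Ybar Y X₁ = 0 :=
  mul_mul_mul_Ybar_eq_zero h.M1_mul_X₁ (by
    rw [Matrix.sub_mul, Matrix.smul_mul, h.annM_M1_mul_Y_mul_self,
      Psi0_mul_eq_zero h.C1_mul_M1_mul_Y, smul_zero, sub_zero])

lemma transpose_Lam2_mul_Ybar : (Lam2 Y X₁ X₂)ᵀ * Ybar Y X₁ = 0 := by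
  rw [Lam2, transpose_mul, transpose_mul, transpose_M1, transpose_sub, transpose_smul,
    transpose_annM, ← Matrix.mul_assoc]
  exact mul_mul_mul_Ybar_eq_zero h.M1_mul_X₁ (by
    rw [Matrix.sub_mul, Matrix.smul_mul, h.annM_M1_mul_Y_mul_self,
      transpose_Psi0_mul_eq_zero h.C1_mul_M1_mul_Y, smul_zero, sub_zero])

lemma Lam3_mul_Ybar : Lam3 Y X₁ X₂ * Ybar Y X₁ = 0 := by
  rw [Lam3, Matrix.smul_mul, Matrix.mul_assoc (M1 X₁) (N2 Y X₁ X₂)ᵀ,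
    mul_mul_mul_Ybar_eq_zero h.M1_mul_X₁
      (by rw [Matrix.mul_assoc, h.N2_mul_M1_mul_Y, Matrix.mul_zero]),
    smul_zero]

lemma Lam4_mul_Ybar : Lam4 Y X₁ * Ybar Y X₁ = 0 := by
  rw [Lam4, Matrix.smul_mul, mul_mul_mul_Ybar_eq_zero h.M1_mul_X₁ h.annM_M1_mul_Y_mul_self,
    smul_zero]

lemma annM_Zfull_mul_Ybar : annM (Zfull Y X₁ X₂) * Ybar Y X₁ = 0 := by
  have hZ : annM (Zfull Y X₁ X₂) * fromCols Y (fromCols X₁ X₂) = 0 :=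
    annM_mul_self h.isUnit_Zfull
  rw [mul_fromCols_eq_zero_iff, mul_fromCols_eq_zero_iff] at hZ
  rw [Ybar, mul_fromCols_eq_zero_iff]
  exact ⟨hZ.1, hZ.2.1⟩

lemma PsiR_mul_Ybar : PsiR Y X₁ X₂ * Ybar Y X₁ = 0 := by
  rw [PsiR, Matrix.smul_mul, Matrix.sub_mul, annM_mul_self h.isUnit_Ybar,
    h.annM_Zfull_mul_Ybar, sub_self, smul_zero]

lemma LamR_mul_Ybar : LamR Y X₁ X₂ * Ybar Y X₁ = 0 := by
  rw [LamR, Matrix.smul_mul, h.annM_Zfull_mul_Ybar, smul_zero]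

end RankCond

theorem stmt19_general {T G k₁ k₂ : ℕ}
    (y : Fin T → ℝ) (Y : Matrix (Fin T) (Fin G) ℝ)
    (X₁ : Matrix (Fin T) (Fin k₁) ℝ) (X₂ : Matrix (Fin T) (Fin k₂) ℝ)
    (hrank : RankCond Y X₁ X₂)
    (Pi1 : Matrix (Fin k₁) (Fin G) ℝ) (Pi2 : Matrix (Fin k₂) (Fin G) ℝ)
    (V : Matrix (Fin T) (Fin G) ℝ)
    (hY : Y = X₁ * Pi1 + X₂ * Pi2 + V)
    (β : Fin G → ℝ) (γ : Fin k₁ → ℝ) (a : Fin G → ℝ) (σ : ℝ)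
    (ε : Fin T → ℝ)
    (hy : y = Y *ᵥ β + X₁ *ᵥ γ + V *ᵥ a + σ • ε)
    (h0 : (M1 X₁ * X₂ * Pi2) *ᵥ a = 0)
    (y₀ : Fin T → ℝ) (hy₀ : y₀ = Y *ᵥ β + X₁ *ᵥ γ + σ • ε) :
    C1 Y X₁ X₂ *ᵥ y = C1 Y X₁ X₂ *ᵥ y₀ ∧
    y ⬝ᵥ (Psi0 Y X₁ X₂ *ᵥ y) = y₀ ⬝ᵥ (Psi0 Y X₁ X₂ *ᵥ y₀) ∧
    y ⬝ᵥ (Lam1 Y X₁ X₂ *ᵥ y) = y₀ ⬝ᵥ (Lam1 Y X₁ X₂ *ᵥ y₀) ∧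
    y ⬝ᵥ (Lam2 Y X₁ X₂ *ᵥ y) = y₀ ⬝ᵥ (Lam2 Y X₁ X₂ *ᵥ y₀) ∧
    y ⬝ᵥ (Lam3 Y X₁ X₂ *ᵥ y) = y₀ ⬝ᵥ (Lam3 Y X₁ X₂ *ᵥ y₀) ∧
    y ⬝ᵥ (Lam4 Y X₁ *ᵥ y) = y₀ ⬝ᵥ (Lam4 Y X₁ *ᵥ y₀) ∧
    y ⬝ᵥ (PsiR Y X₁ X₂ *ᵥ y) = y₀ ⬝ᵥ (PsiR Y X₁ X₂ *ᵥ y₀) ∧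
    y ⬝ᵥ (LamR Y X₁ X₂ *ᵥ y) = y₀ ⬝ᵥ (LamR Y X₁ X₂ *ᵥ y₀) ∧
    ((k₂ : ℝ) - (G : ℝ)) / (G : ℝ) *
        (y ⬝ᵥ (Psi0 Y X₁ X₂ *ᵥ y) / (y ⬝ᵥ (Lam1 Y X₁ X₂ *ᵥ y)))
      = ((k₂ : ℝ) - (G : ℝ)) / (G : ℝ) *
          (y₀ ⬝ᵥ (Psi0 Y X₁ X₂ *ᵥ y₀) / (y₀ ⬝ᵥ (Lam1 Y X₁ X₂ *ᵥ y₀))) ∧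
    ((T : ℝ) - (k₁ : ℝ) - 2 * (G : ℝ)) / (G : ℝ) *
        (y ⬝ᵥ (Psi0 Y X₁ X₂ *ᵥ y) / (y ⬝ᵥ (Lam2 Y X₁ X₂ *ᵥ y)))
      = ((T : ℝ) - (k₁ : ℝ) - 2 * (G : ℝ)) / (G : ℝ) *
          (y₀ ⬝ᵥ (Psi0 Y X₁ X₂ *ᵥ y₀) / (y₀ ⬝ᵥ (Lam2 Y X₁ X₂ *ᵥ y₀))) ∧
    ((T : ℝ) - (k₁ : ℝ) - (G : ℝ)) *
        (y ⬝ᵥ (Psi0 Y X₁ X₂ *ᵥ y) / (y ⬝ᵥ (Lam3 Y X₁ X₂ *ᵥ y)))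
      = ((T : ℝ) - (k₁ : ℝ) - (G : ℝ)) *
          (y₀ ⬝ᵥ (Psi0 Y X₁ X₂ *ᵥ y₀) / (y₀ ⬝ᵥ (Lam3 Y X₁ X₂ *ᵥ y₀))) ∧
    ((T : ℝ) - (k₁ : ℝ) - (G : ℝ)) *
        (y ⬝ᵥ (Psi0 Y X₁ X₂ *ᵥ y) / (y ⬝ᵥ (Lam4 Y X₁ *ᵥ y)))
      = ((T : ℝ) - (k₁ : ℝ) - (G : ℝ)) *
          (y₀ ⬝ᵥ (Psi0 Y X₁ X₂ *ᵥ y₀) / (y₀ ⬝ᵥ (Lam4 Y X₁ *ᵥ y₀))) ∧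
    ((T : ℝ) - (k₁ : ℝ) - (k₂ : ℝ) - (G : ℝ)) / (k₂ : ℝ) *
        (y ⬝ᵥ (PsiR Y X₁ X₂ *ᵥ y) / (y ⬝ᵥ (LamR Y X₁ X₂ *ᵥ y)))
      = ((T : ℝ) - (k₁ : ℝ) - (k₂ : ℝ) - (G : ℝ)) / (k₂ : ℝ) *
          (y₀ ⬝ᵥ (PsiR Y X₁ X₂ *ᵥ y₀) / (y₀ ⬝ᵥ (LamR Y X₁ X₂ *ᵥ y₀))) ∧
    (T : ℝ) *
        ((C1 Y X₁ X₂ *ᵥ y) ⬝ᵥ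
          (((y ⬝ᵥ (Lam3 Y X₁ X₂ *ᵥ y)) • (OmIV Y X₁ X₂)⁻¹ -
              (y ⬝ᵥ (Lam4 Y X₁ *ᵥ y)) • (OmLS Y X₁)⁻¹)⁻¹ *ᵥ
            (C1 Y X₁ X₂ *ᵥ y)))
      = (T : ℝ) *
          ((C1 Y X₁ X₂ *ᵥ y₀) ⬝ᵥ
            (((y₀ ⬝ᵥ (Lam3 Y X₁ X₂ *ᵥ y₀)) • (OmIV Y X₁ X₂)⁻¹ -
                (y₀ ⬝ᵥ (Lam4 Y X₁ *ᵥ y₀)) • (OmLS Y X₁)⁻¹)⁻¹ *ᵥ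
              (C1 Y X₁ X₂ *ᵥ y₀))) := by
  obtain ⟨v, rfl⟩ := exists_eq_add_Ybar_mulVec hY hy h0 hy₀
  have hC1 : C1 Y X₁ X₂ *ᵥ (y₀ + Ybar Y X₁ *ᵥ v) = C1 Y X₁ X₂ *ᵥ y₀ := by
    rw [mulVec_add, mulVec_mulVec, hrank.C1_mul_Ybar, zero_mulVec, add_zero]
  have quad {Q : Matrix (Fin T) (Fin T) ℝ} (hQ : Q * Ybar Y X₁ = 0)
      (hQt : Qᵀ * Ybar Y X₁ = 0) := dotProduct_mulVec_add_mulVec_of_mul_eq_zero hQ hQt y₀ v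
  have hΨ₀ := quad hrank.Psi0_mul_Ybar hrank.transpose_Psi0_mul_Ybar
  have hΛ₁ := quad hrank.Lam1_mul_Ybar (hrank.transpose_Lam1 ▸ hrank.Lam1_mul_Ybar)
  have hΛ₂ := quad hrank.Lam2_mul_Ybar hrank.transpose_Lam2_mul_Ybar
  have hΛ₃ := quad hrank.Lam3_mul_Ybar (transpose_Lam3 ▸ hrank.Lam3_mul_Ybar)
  have hΛ₄ := quad hrank.Lam4_mul_Ybar (transpose_Lam4 ▸ hrank.Lam4_mul_Ybar)
  have hΨR := quad hrank.PsiR_mul_Ybar (transpose_PsiR ▸ hrank.PsiR_mul_Ybar)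
  have hΛR := quad hrank.LamR_mul_Ybar (transpose_LamR ▸ hrank.LamR_mul_Ybar)
  refine ⟨hC1, hΨ₀, hΛ₁, hΛ₂, hΛ₃, hΛ₄, hΨR, hΛR, ?_, ?_, ?_, ?_, ?_, ?_⟩ <;>
    simp only [hC1, hΨ₀, hΛ₁, hΛ₂, hΛ₃, hΛ₄, hΨR, hΛR]

/-- **Flat power under complete non-identification.**  Under the rank condition, if the
linear reduced form `Y = X₁Pi1 + X₂Pi2 + V` holds, `y = Yβ + X₁γ + Va + σε` with
`σ ≠ 0`, and `M₁X₂Pi2a = 0` (in particular if `Pi2 = 0`), then, with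
`y₀ = Yβ + X₁γ + σε`, one has `C₁y = C₁y₀`, `yᵀΨ₀y = y₀ᵀΨ₀y₀`, `yᵀΛ_ly = y₀ᵀΛ_ly₀`
(`l = 1,…,4`), `yᵀΨ_Ry = y₀ᵀΨ_Ry₀`, `yᵀΛ_Ry = y₀ᵀΛ_Ry₀`; hence every exogeneity
statistic takes exactly the same value at `y` as at `y₀`, so the tests cannot
distinguish the alternative from the null. -/
theorem stmt19 {T G k₁ k₂ : ℕ}
    (hT : 0 < T) (hG : 0 < G) (hk₁ : 0 < k₁) (hk₂ : 0 < k₂)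
    (y : Fin T → ℝ) (Y : Matrix (Fin T) (Fin G) ℝ)
    (X₁ : Matrix (Fin T) (Fin k₁) ℝ) (X₂ : Matrix (Fin T) (Fin k₂) ℝ)
    (hrank : RankCond Y X₁ X₂)
    (Pi1 : Matrix (Fin k₁) (Fin G) ℝ) (Pi2 : Matrix (Fin k₂) (Fin G) ℝ)
    (V : Matrix (Fin T) (Fin G) ℝ)
    (hY : Y = X₁ * Pi1 + X₂ * Pi2 + V)
    (β : Fin G → ℝ) (γ : Fin k₁ → ℝ) (a : Fin G → ℝ) (σ : ℝ) (hσ : σ ≠ 0)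
    (ε : Fin T → ℝ)
    (hy : y = Y *ᵥ β + X₁ *ᵥ γ + V *ᵥ a + σ • ε)
    (h0 : (M1 X₁ * X₂ * Pi2) *ᵥ a = 0)
    (y₀ : Fin T → ℝ) (hy₀ : y₀ = Y *ᵥ β + X₁ *ᵥ γ + σ • ε) :
    C1 Y X₁ X₂ *ᵥ y = C1 Y X₁ X₂ *ᵥ y₀ ∧
    y ⬝ᵥ (Psi0 Y X₁ X₂ *ᵥ y) = y₀ ⬝ᵥ (Psi0 Y X₁ X₂ *ᵥ y₀) ∧
    y ⬝ᵥ (Lam1 Y X₁ X₂ *ᵥ y) = y₀ ⬝ᵥ (Lam1 Y X₁ X₂ *ᵥ y₀) ∧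
    y ⬝ᵥ (Lam2 Y X₁ X₂ *ᵥ y) = y₀ ⬝ᵥ (Lam2 Y X₁ X₂ *ᵥ y₀) ∧
    y ⬝ᵥ (Lam3 Y X₁ X₂ *ᵥ y) = y₀ ⬝ᵥ (Lam3 Y X₁ X₂ *ᵥ y₀) ∧
    y ⬝ᵥ (Lam4 Y X₁ *ᵥ y) = y₀ ⬝ᵥ (Lam4 Y X₁ *ᵥ y₀) ∧
    y ⬝ᵥ (PsiR Y X₁ X₂ *ᵥ y) = y₀ ⬝ᵥ (PsiR Y X₁ X₂ *ᵥ y₀) ∧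
    y ⬝ᵥ (LamR Y X₁ X₂ *ᵥ y) = y₀ ⬝ᵥ (LamR Y X₁ X₂ *ᵥ y₀) ∧
    ((k₂ : ℝ) - (G : ℝ)) / (G : ℝ) *
        (y ⬝ᵥ (Psi0 Y X₁ X₂ *ᵥ y) / (y ⬝ᵥ (Lam1 Y X₁ X₂ *ᵥ y)))
      = ((k₂ : ℝ) - (G : ℝ)) / (G : ℝ) *
          (y₀ ⬝ᵥ (Psi0 Y X₁ X₂ *ᵥ y₀) / (y₀ ⬝ᵥ (Lam1 Y X₁ X₂ *ᵥ y₀))) ∧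
    ((T : ℝ) - (k₁ : ℝ) - 2 * (G : ℝ)) / (G : ℝ) *
        (y ⬝ᵥ (Psi0 Y X₁ X₂ *ᵥ y) / (y ⬝ᵥ (Lam2 Y X₁ X₂ *ᵥ y)))
      = ((T : ℝ) - (k₁ : ℝ) - 2 * (G : ℝ)) / (G : ℝ) *
          (y₀ ⬝ᵥ (Psi0 Y X₁ X₂ *ᵥ y₀) / (y₀ ⬝ᵥ (Lam2 Y X₁ X₂ *ᵥ y₀))) ∧
    ((T : ℝ) - (k₁ : ℝ) - (G : ℝ)) *
        (y ⬝ᵥ (Psi0 Y X₁ X₂ *ᵥ y) / (y ⬝ᵥ (Lam3 Y X₁ X₂ *ᵥ y)))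
      = ((T : ℝ) - (k₁ : ℝ) - (G : ℝ)) *
          (y₀ ⬝ᵥ (Psi0 Y X₁ X₂ *ᵥ y₀) / (y₀ ⬝ᵥ (Lam3 Y X₁ X₂ *ᵥ y₀))) ∧
    ((T : ℝ) - (k₁ : ℝ) - (G : ℝ)) *
        (y ⬝ᵥ (Psi0 Y X₁ X₂ *ᵥ y) / (y ⬝ᵥ (Lam4 Y X₁ *ᵥ y)))
      = ((T : ℝ) - (k₁ : ℝ) - (G : ℝ)) *
          (y₀ ⬝ᵥ (Psi0 Y X₁ X₂ *ᵥ y₀) / (y₀ ⬝ᵥ (Lam4 Y X₁ *ᵥ y₀))) ∧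
    ((T : ℝ) - (k₁ : ℝ) - (k₂ : ℝ) - (G : ℝ)) / (k₂ : ℝ) *
        (y ⬝ᵥ (PsiR Y X₁ X₂ *ᵥ y) / (y ⬝ᵥ (LamR Y X₁ X₂ *ᵥ y)))
      = ((T : ℝ) - (k₁ : ℝ) - (k₂ : ℝ) - (G : ℝ)) / (k₂ : ℝ) *
          (y₀ ⬝ᵥ (PsiR Y X₁ X₂ *ᵥ y₀) / (y₀ ⬝ᵥ (LamR Y X₁ X₂ *ᵥ y₀))) ∧
    (T : ℝ) *
        ((C1 Y X₁ X₂ *ᵥ y) ⬝ᵥ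
          (((y ⬝ᵥ (Lam3 Y X₁ X₂ *ᵥ y)) • (OmIV Y X₁ X₂)⁻¹ -
              (y ⬝ᵥ (Lam4 Y X₁ *ᵥ y)) • (OmLS Y X₁)⁻¹)⁻¹ *ᵥ
            (C1 Y X₁ X₂ *ᵥ y)))
      = (T : ℝ) *
          ((C1 Y X₁ X₂ *ᵥ y₀) ⬝ᵥ
            (((y₀ ⬝ᵥ (Lam3 Y X₁ X₂ *ᵥ y₀)) • (OmIV Y X₁ X₂)⁻¹ -
                (y₀ ⬝ᵥ (Lam4 Y X₁ *ᵥ y₀)) • (OmLS Y X₁)⁻¹)⁻¹ *ᵥ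
              (C1 Y X₁ X₂ *ᵥ y₀))) :=
  stmt19_general y Y X₁ X₂ hrank Pi1 Pi2 V hY β γ a σ ε hy h0 y₀ hy₀
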